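/- Define J₀(z) = ∑_{k=0}^∞ (−1)^k z^{2k} / (4^k (k!)²). Then for every λ ∈ ℝ, the function u(y,t) := J₀(√(y² + 2λ y e^t)) (interpreted via the entire even power series, i.e. u(y,t) = ∑_{k≥0} (−1)^k (y² + 2λ y e^t)^k / (4^k (k!)²)) satisfies u_tt = y²u_yy + y u_y + y²u for all y > 0 and t ∈ ℝ. -/

import Mathlib

/-- `J₀(√(y² + 2λ y e^t))` interpreted via the entire even power series. -/
noncomputable def besselSol (l : ℝ) (p : ℝ × ℝ) : ℝ :=
  ∑' k : ℕ, (-1) ^ k * (p.1 ^ 2 + 2 * l * p.1 * Real.exp p.2) ^ k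
    / (4 ^ k * ((Nat.factorial k : ℝ)) ^ 2)

/-- First partial derivative in the first coordinate. -/
noncomputable def pdx1 (u : ℝ × ℝ → ℝ) (p : ℝ × ℝ) : ℝ :=
  deriv (fun x => u (x, p.2)) p.1

/-- Second partial derivative in the first coordinate. -/
noncomputable def pdx2 (u : ℝ × ℝ → ℝ) (p : ℝ × ℝ) : ℝ :=
  deriv (fun x => deriv (fun x' => u (x', p.2)) x) p.1

/-- Second partial derivative in the second coordinate. -/
noncomputable def pdt2 (u : ℝ × ℝ → ℝ) (p : ℝ × ℝ) : ℝ :=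
  deriv (fun t => deriv (fun t' => u (p.1, t')) t) p.2

/-!
Write `F(w) = ∑ₖ (-1)ᵏ wᵏ / (4ᵏ (k!)²) = J₀(√w)`, so that `u = F ∘ q` with
`q(y, t) = y² + 2λ y eᵗ`. Then `q_t = q_tt = q - y²`, `y q_y = q + y²` and `q_yy = 2`, and the
chain rule gives `u_tt - y² u_yy - y u_y - y² u = -y² (4 q F''(q) + 4 F'(q) + F(q))`, which vanishes
because `F` solves the transformed Bessel equation `4 w F'' + 4 F' + F = 0`. The derivatives of
`F` are computed by termwise differentiation of its everywhere convergent power series.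
-/

section PowerSeries

variable {c : ℕ → ℝ}

def derivCoeff (c : ℕ → ℝ) (k : ℕ) : ℝ := (k + 1) * c (k + 1)

noncomputable def powerSum (c : ℕ → ℝ) (x : ℝ) : ℝ := ∑' k, c k * x ^ k

lemma summable_derivCoeff_mul_pow (hc : ∀ x, Summable fun k => c k * x ^ k) (x : ℝ) :
    Summable fun k => derivCoeff c k * x ^ k := by
  set R := max |x| 1
  have hR : 1 ≤ R := le_max_right _ _
  have hdom : Summable fun k => |c (k + 1) * (2 * R) ^ (k + 1)| :=
    (summable_nat_add_iff 1).mpr (hc (2 * R)).abs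
  refine hdom.of_norm_bounded fun k => ?_
  have hk : (k + 1 : ℝ) ≤ 2 ^ (k + 1) := by exact_mod_cast (Nat.lt_two_pow_self).le
  have hxR : |x| ^ k ≤ R ^ (k + 1) :=
    (pow_le_pow_left₀ (abs_nonneg x) (le_max_left _ _) k).trans (pow_le_pow_right₀ hR k.le_succ)
  rw [Real.norm_eq_abs, derivCoeff, abs_mul, abs_mul, abs_mul, abs_pow,
    abs_of_pos (by positivity : (0 : ℝ) < k + 1),
    abs_of_nonneg (by positivity : (0 : ℝ) ≤ (2 * R) ^ (k + 1)), mul_pow]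
  calc (k + 1 : ℝ) * |c (k + 1)| * |x| ^ k ≤ 2 ^ (k + 1) * |c (k + 1)| * R ^ (k + 1) := by gcongr
    _ = _ := by ring

lemma hasSum_natCast_mul_mul_pow (hc : ∀ x, Summable fun k => c k * x ^ k) (x : ℝ) :
    HasSum (fun k => k * c k * x ^ k) (x * powerSum (derivCoeff c) x) := by
  refine (hasSum_nat_add_iff' 1).mp ?_
  simpa [derivCoeff, powerSum, pow_succ, mul_comm, mul_left_comm, mul_assoc] using
    (summable_derivCoeff_mul_pow hc x).hasSum.mul_left x

lemma hasDerivAt_powerSum (hc : ∀ x, Summable fun k => c k * x ^ k) (x : ℝ) :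
    HasDerivAt (powerSum c) (powerSum (derivCoeff c) x) x := by
  set R := |x| + 1
  have hbound : Summable fun k => |c k| * k * R ^ (k - 1) := by
    refine (summable_nat_add_iff 1).mp ((summable_derivCoeff_mul_pow hc R).abs.congr fun k => ?_)
    rw [derivCoeff, abs_mul, abs_mul, abs_pow, abs_of_pos (by positivity : (0 : ℝ) < R),
      abs_of_pos (by positivity : (0 : ℝ) < k + 1)]
    push_cast
    ring_nf
  have hterm := hasDerivAt_tsum_of_isPreconnected hbound Metric.isOpen_ball
    (convex_ball (0 : ℝ) R).isPreconnected (fun k y _ => (hasDerivAt_pow k y).const_mul (c k))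
    (fun k y hy => ?_) (Metric.mem_ball_self (by positivity)) (hc 0)
    (by simp [R] : x ∈ Metric.ball 0 R)
  · refine hterm.congr_deriv (HasSum.tsum_eq ((hasSum_nat_add_iff' 1).mp ?_))
    simpa [derivCoeff, powerSum, mul_comm, mul_left_comm, mul_assoc] using
      (summable_derivCoeff_mul_pow hc x).hasSum
  · have hyR : |y| ≤ R := by simpa [Real.dist_eq] using (Metric.mem_ball.mp hy).le
    rw [Real.norm_eq_abs, abs_mul, abs_mul, abs_pow, Nat.abs_cast, ← mul_assoc]
    gcongr

end PowerSeries

section Chain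

variable {𝕜 : Type*} [NontriviallyNormedField 𝕜] {f f' f'' g g' g'' : 𝕜 → 𝕜}

lemma deriv_comp_eq (hf : ∀ x, HasDerivAt f (f' x) x) (hg : ∀ x, HasDerivAt g (g' x) x) (x : 𝕜) :
    deriv (fun s => f (g s)) x = f' (g x) * g' x :=
  ((hf (g x)).comp x (hg x)).deriv

lemma deriv_deriv_comp_eq (hf : ∀ x, HasDerivAt f (f' x) x) (hf' : ∀ x, HasDerivAt f' (f'' x) x)
    (hg : ∀ x, HasDerivAt g (g' x) x) (hg' : ∀ x, HasDerivAt g' (g'' x) x) (x : 𝕜) :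
    deriv (fun s => deriv (fun s' => f (g s')) s) x = f'' (g x) * g' x ^ 2 + f' (g x) * g'' x := by
  have h : HasDerivAt (fun s => f' (g s) * g' s) (f'' (g x) * g' x * g' x + f' (g x) * g'' x) x :=
    ((hf' (g x)).comp x (hg x)).mul (hg' x)
  simp only [deriv_comp_eq hf hg]
  rw [h.deriv]
  ring

end Chain

-- `powerSum besselJ0Coeff` is the function `F(w) = J₀(√w)`.
noncomputable def besselJ0Coeff (k : ℕ) : ℝ := (-1) ^ k / (4 ^ k * (k.factorial : ℝ) ^ 2)

lemma abs_besselJ0Coeff_le (k : ℕ) : |besselJ0Coeff k| ≤ 1 / k.factorial := by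
  have h4 : (1 : ℝ) ≤ 4 ^ k := one_le_pow₀ (by norm_num)
  have hk : (1 : ℝ) ≤ k.factorial := by exact_mod_cast k.factorial_pos
  rw [besselJ0Coeff, abs_div, abs_pow, abs_neg, abs_one, one_pow, abs_of_pos (by positivity),
    div_le_div_iff₀ (by positivity) (by positivity)]
  nlinarith

lemma summable_besselJ0Coeff_mul_pow (x : ℝ) : Summable fun k => besselJ0Coeff k * x ^ k := by
  refine (Real.summable_pow_div_factorial |x|).of_norm_bounded fun k => ?_
  rw [Real.norm_eq_abs, abs_mul, abs_pow, div_eq_mul_one_div, mul_comm (|x| ^ k)]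
  gcongr
  exact abs_besselJ0Coeff_le k

lemma four_mul_succ_sq_mul_besselJ0Coeff_succ (k : ℕ) :
    4 * ((k : ℝ) + 1) ^ 2 * besselJ0Coeff (k + 1) = -besselJ0Coeff k := by
  rw [besselJ0Coeff, besselJ0Coeff, Nat.factorial_succ, pow_succ, pow_succ]
  push_cast
  field_simp
  ring

lemma besselJ0_ode (w : ℝ) :
    4 * w * powerSum (derivCoeff (derivCoeff besselJ0Coeff)) w
      + 4 * powerSum (derivCoeff besselJ0Coeff) w + powerSum besselJ0Coeff w = 0 := by
  have hc := summable_besselJ0Coeff_mul_pow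
  have h2 := hasSum_natCast_mul_mul_pow (summable_derivCoeff_mul_pow hc) w
  have h1 : HasSum _ (powerSum (derivCoeff besselJ0Coeff) w) :=
    (summable_derivCoeff_mul_pow hc w).hasSum
  have h0 : HasSum _ (powerSum besselJ0Coeff w) := (hc w).hasSum
  have h := (((h2.add h1).mul_left 4).add h0).unique (hasSum_zero.congr_fun fun k => ?_)
  · linear_combination h
  · rw [derivCoeff]
    linear_combination w ^ k * four_mul_succ_sq_mul_besselJ0Coeff_succ k

lemma besselSol_eq_powerSum (l : ℝ) (p : ℝ × ℝ) :
    besselSol l p = powerSum besselJ0Coeff (p.1 ^ 2 + 2 * l * p.1 * Real.exp p.2) :=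
  tsum_congr fun k => by rw [besselJ0Coeff]; ring

theorem symmetry_solution_solves_pde (l : ℝ) :
    ∀ y t : ℝ, 0 < y →
      pdt2 (besselSol l) (y, t)
        = y ^ 2 * pdx2 (besselSol l) (y, t) + y * pdx1 (besselSol l) (y, t)
          + y ^ 2 * besselSol l (y, t) := by
  intro y t _
  have hJ := hasDerivAt_powerSum summable_besselJ0Coeff_mul_pow
  have hJ' := hasDerivAt_powerSum (summable_derivCoeff_mul_pow summable_besselJ0Coeff_mul_pow)
  have hx (x : ℝ) :
      HasDerivAt (fun x => x ^ 2 + 2 * l * x * Real.exp t) (2 * x + 2 * l * Real.exp t) x := by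
    refine ((hasDerivAt_pow 2 x).add
      (((hasDerivAt_id x).const_mul (2 * l)).mul_const (Real.exp t))).congr_deriv ?_
    norm_num
  have hx' (x : ℝ) : HasDerivAt (fun x => 2 * x + 2 * l * Real.exp t) 2 x := by
    simpa using ((hasDerivAt_id x).const_mul 2).add_const (2 * l * Real.exp t)
  have ht (s : ℝ) :
      HasDerivAt (fun s => y ^ 2 + 2 * l * y * Real.exp s) (2 * l * y * Real.exp s) s :=
    ((Real.hasDerivAt_exp s).const_mul (2 * l * y)).const_add (y ^ 2)
  have ht' (s : ℝ) : HasDerivAt (fun s => 2 * l * y * Real.exp s) (2 * l * y * Real.exp s) s :=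
    (Real.hasDerivAt_exp s).const_mul (2 * l * y)
  simp only [pdt2, pdx2, pdx1, besselSol_eq_powerSum]
  rw [deriv_deriv_comp_eq hJ hJ' ht ht' t, deriv_deriv_comp_eq hJ hJ' hx hx' y]
  linear_combination
    (-y ^ 2) * besselJ0_ode (y ^ 2 + 2 * l * y * Real.exp t) - y * deriv_comp_eq hJ hx y
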